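/- arXiv:2402.10687 — 3 statements merged into one kernel-verified Lean document; each statement's English description precedes it below -/
import Mathlib

section
/- Let n be a positive integer, b ∈ ℂⁿ, and c ∈ ℝ with ‖b‖² < c and 0 < c. Then the supremum over all v ≥ 0 and u ∈ ℂⁿ of the function g(u,v) = log(1+v) − v + 2√(1+v)·Re(⟪u, b⟫) − c‖u‖² equals log(1 + ‖b‖²/(c − ‖b‖²)), and this supremum is attained at v* = ‖b‖²/(c − ‖b‖²) and u* = (√(1+v*)/c)·b. -/
/-!
For fixed `v`, the terms in `u` form a concave quadratic whose maximum `(1 + v) ‖b‖² / c` is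
reached at `u = (√(1 + v) / c) • b`. Writing `1 + v* = c / (c - ‖b‖²)`, what remains is
`log (1 + v) - (1 + v) / (1 + v*) + 1`, which by `log x ≤ x - 1` is at most `log (1 + v*)`,
with equality at `v = v*`.
-/

open RCLike in
theorem two_mul_re_inner_sub_mul_norm_sq_le {𝕜 E : Type*} [RCLike 𝕜] [NormedAddCommGroup E]
    [InnerProductSpace 𝕜 E] {c : ℝ} (hc : 0 < c) (s : ℝ) (u b : E) :
    2 * s * re (inner 𝕜 u b) - c * ‖u‖ ^ 2 ≤ s ^ 2 * ‖b‖ ^ 2 / c := by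
  have hcs : s * re (inner 𝕜 u b) ≤ |s| * (‖u‖ * ‖b‖) :=
    calc s * re (inner 𝕜 u b) ≤ |s| * |re (inner 𝕜 u b)| := by
          rw [← abs_mul]; exact le_abs_self _
      _ ≤ |s| * (‖u‖ * ‖b‖) := by
          gcongr; exact (abs_re_le_norm _).trans (norm_inner_le_norm u b)
  rw [le_div_iff₀ hc]
  nlinarith [sq_nonneg (c * ‖u‖ - |s| * ‖b‖), sq_abs s]

open RCLike in
theorem two_mul_re_inner_sub_mul_norm_sq_smul {𝕜 E : Type*} [RCLike 𝕜] [NormedAddCommGroup E]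
    [InnerProductSpace 𝕜 E] [NormedSpace ℝ E] [IsScalarTower ℝ 𝕜 E] {c : ℝ} (hc : c ≠ 0)
    (s : ℝ) (b : E) :
    2 * s * re (inner 𝕜 ((s / c) • b) b) - c * ‖(s / c) • b‖ ^ 2 = s ^ 2 * ‖b‖ ^ 2 / c := by
  rw [real_smul_eq_coe_smul (K := 𝕜), inner_smul_real_left, inner_self_eq_norm_sq_to_K,
    smul_re, ← ofReal_pow, ofReal_re, ← real_smul_eq_coe_smul, norm_smul, mul_pow,
    Real.norm_eq_abs, sq_abs]
  field_simp
  ring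

theorem Real.log_sub_div_le {x y : ℝ} (hx : 0 < x) (hy : 0 < y) :
    Real.log x - x / y ≤ Real.log y - 1 := by
  have h := Real.log_le_sub_one_of_pos (div_pos hx hy)
  rw [Real.log_div hx.ne' hy.ne'] at h
  linarith

theorem stmt0_general (n : ℕ) (b : EuclideanSpace ℂ (Fin n)) (c : ℝ)
    (hc : 0 < c) (hb : ‖b‖ ^ 2 < c) :
    let g : EuclideanSpace ℂ (Fin n) → ℝ → ℝ := fun u v =>
      Real.log (1 + v) - v + 2 * Real.sqrt (1 + v) * (inner ℂ u b : ℂ).re - c * ‖u‖ ^ 2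
    let vstar : ℝ := ‖b‖ ^ 2 / (c - ‖b‖ ^ 2)
    let ustar : EuclideanSpace ℂ (Fin n) := (Real.sqrt (1 + vstar) / c) • b
    (∀ v : ℝ, 0 ≤ v → ∀ u : EuclideanSpace ℂ (Fin n),
        g u v ≤ Real.log (1 + ‖b‖ ^ 2 / (c - ‖b‖ ^ 2)))
      ∧ 0 ≤ vstar
      ∧ g ustar vstar = Real.log (1 + ‖b‖ ^ 2 / (c - ‖b‖ ^ 2)) := by
  intro g vstar ustar
  have hgap : 0 < c - ‖b‖ ^ 2 := sub_pos.mpr hb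
  have hvstar : 0 ≤ vstar := by positivity
  have hresidual (v : ℝ) : (1 + v) * ‖b‖ ^ 2 / c - v = 1 - (1 + v) / (1 + vstar) := by
    simp only [vstar]
    field_simp
    ring
  refine ⟨fun v hv u => ?_, hvstar, ?_⟩
  · have hquad := two_mul_re_inner_sub_mul_norm_sq_le (𝕜 := ℂ) hc (Real.sqrt (1 + v)) u b
    rw [RCLike.re_to_complex, Real.sq_sqrt (by linarith)] at hquad
    have hlog := Real.log_sub_div_le (x := 1 + v) (by linarith) (by linarith : 0 < 1 + vstar)
    change g u v ≤ Real.log (1 + vstar)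
    simp only [g]
    linarith [hresidual v]
  · have hquad := two_mul_re_inner_sub_mul_norm_sq_smul (𝕜 := ℂ) hc.ne' (Real.sqrt (1 + vstar)) b
    rw [RCLike.re_to_complex, Real.sq_sqrt (by linarith)] at hquad
    have hself : (1 + vstar) / (1 + vstar) = 1 := div_self (by linarith)
    change g ustar vstar = Real.log (1 + vstar)
    simp only [g, ustar]
    linarith [hresidual vstar]

/-- For `b ∈ ℂⁿ` and `c ∈ ℝ` with `‖b‖² < c`, `0 < c`, the supremum over
`v ≥ 0`, `u ∈ ℂⁿ` of `g(u,v) = log(1+v) − v + 2√(1+v)·Re⟪u,b⟫ − c‖u‖²` equals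
`log(1 + ‖b‖²/(c − ‖b‖²))`, attained at `v* = ‖b‖²/(c−‖b‖²)`, `u* = (√(1+v*)/c)·b`. -/
theorem stmt0 (n : ℕ) (hn : 0 < n) (b : EuclideanSpace ℂ (Fin n)) (c : ℝ)
    (hc : 0 < c) (hb : ‖b‖ ^ 2 < c) :
    let g : EuclideanSpace ℂ (Fin n) → ℝ → ℝ := fun u v =>
      Real.log (1 + v) - v + 2 * Real.sqrt (1 + v) * (inner ℂ u b : ℂ).re - c * ‖u‖ ^ 2
    let vstar : ℝ := ‖b‖ ^ 2 / (c - ‖b‖ ^ 2)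
    let ustar : EuclideanSpace ℂ (Fin n) := (Real.sqrt (1 + vstar) / c) • b
    (∀ v : ℝ, 0 ≤ v → ∀ u : EuclideanSpace ℂ (Fin n),
        g u v ≤ Real.log (1 + ‖b‖ ^ 2 / (c - ‖b‖ ^ 2)))
      ∧ 0 ≤ vstar
      ∧ g ustar vstar = Real.log (1 + ‖b‖ ^ 2 / (c - ‖b‖ ^ 2)) :=
  stmt0_general n b c hc hb
end

section
/- Let γ ∈ ℝ with γ ≥ 0. Then for every v ≥ 0, log(1+v) − v + (1+v)·γ/(1+γ) ≤ log(1+γ), with equality if and only if v = γ. -/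
/-!
Writing `x = (1 + v) / (1 + γ)`, the gap `log (1 + γ) - (log (1 + v) - v + (1 + v) γ / (1 + γ))`
equals `x - 1 - log x`, which is nonnegative and vanishes only at `x = 1`, i.e. at `v = γ`.
-/

open Real

theorem Real.log_eq_sub_one_iff {x : ℝ} (hx : 0 < x) : log x = x - 1 ↔ x = 1 :=
  ⟨fun h => by_contra fun h1 => (log_lt_sub_one_of_pos hx h1).ne h, fun h => by simp [h]⟩

noncomputable def lagrangianDualRate (γ v : ℝ) : ℝ :=
  log (1 + v) - v + (1 + v) * γ / (1 + γ)

section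

variable {γ v : ℝ}

theorem log_one_add_sub_lagrangianDualRate (hγ : -1 < γ) (hv : -1 < v) :
    log (1 + γ) - lagrangianDualRate γ v
      = (1 + v) / (1 + γ) - 1 - log ((1 + v) / (1 + γ)) := by
  have hγ1 : 1 + γ ≠ 0 := by linarith
  rw [lagrangianDualRate, log_div (by linarith) hγ1]
  field_simp
  ring

theorem lagrangianDualRate_le_log_one_add (hγ : -1 < γ) (hv : -1 < v) :
    lagrangianDualRate γ v ≤ log (1 + γ) := by
  have hgap := log_one_add_sub_lagrangianDualRate hγ hv
  have hlog := log_le_sub_one_of_pos (div_pos (by linarith : 0 < 1 + v) (by linarith : 0 < 1 + γ))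
  linarith

theorem lagrangianDualRate_eq_log_one_add_iff (hγ : -1 < γ) (hv : -1 < v) :
    lagrangianDualRate γ v = log (1 + γ) ↔ v = γ := by
  have hgap := log_one_add_sub_lagrangianDualRate hγ hv
  have hx : 0 < (1 + v) / (1 + γ) := div_pos (by linarith) (by linarith)
  calc lagrangianDualRate γ v = log (1 + γ)
      ↔ log ((1 + v) / (1 + γ)) = (1 + v) / (1 + γ) - 1 := by constructor <;> intro h <;> linarith
    _ ↔ (1 + v) / (1 + γ) = 1 := log_eq_sub_one_iff hx
    _ ↔ v = γ := by rw [div_eq_one_iff_eq (by linarith)]; exact add_right_inj 1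

end

/-- For `γ ≥ 0` and every `v ≥ 0`:
`log(1+v) − v + (1+v)·γ/(1+γ) ≤ log(1+γ)`, with equality iff `v = γ`. -/
theorem stmt2 (γ : ℝ) (hγ : 0 ≤ γ) (v : ℝ) (hv : 0 ≤ v) :
    Real.log (1 + v) - v + (1 + v) * γ / (1 + γ) ≤ Real.log (1 + γ)
      ∧ (Real.log (1 + v) - v + (1 + v) * γ / (1 + γ) = Real.log (1 + γ) ↔ v = γ) :=
  ⟨lagrangianDualRate_le_log_one_add (by linarith) (by linarith),
    lagrangianDualRate_eq_log_one_add_iff (by linarith) (by linarith)⟩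
end

section
/- Let Ξ be an n×n Hermitian positive definite complex matrix, λ > 0 a real number, C an n×n Hermitian positive semidefinite complex matrix, and w₀, ω ∈ ℂⁿ. For μ ≥ 0 define w(μ) = (Ξ + μλI)⁻¹(ω + μ·C·w₀) and P(μ) = λ‖w(μ)‖² − 2·Re(w₀ᴴ C w(μ)). Then P is monotonically non-increasing on [0, ∞); i.e., for all 0 ≤ μ₁ ≤ μ₂, P(μ₂) ≤ P(μ₁). -/
open scoped Matrix ComplexOrder

/-!
`w(μ)` solves `(Ξ + μλI) w = ω + μ C w₀`, so it minimizes the strictly convex quadratic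
`Re (vᴴ (Ξ + μλI) v) - 2 Re ((ω + μ C w₀)ᴴ v)`, which is the Lagrangian `F(v) + μ P(v)` with
`F(v) = Re (vᴴ Ξ v) - 2 Re (ωᴴ v)`. Comparing the minimality of `w(μ₁)` and `w(μ₂)`, each tested
at the other point, gives `(μ₂ - μ₁) (P(μ₂) - P(μ₁)) ≤ 0`.
-/

open Matrix

theorem le_of_minimizes_add_mul {α : Type*} {F Q : α → ℝ} {x₁ x₂ : α} {μ₁ μ₂ : ℝ}
    (h₁ : ∀ v, F x₁ + μ₁ * Q x₁ ≤ F v + μ₁ * Q v)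
    (h₂ : ∀ v, F x₂ + μ₂ * Q x₂ ≤ F v + μ₂ * Q v) (hμ : μ₁ < μ₂) :
    Q x₂ ≤ Q x₁ := by
  have key : (μ₂ - μ₁) * (Q x₂ - Q x₁) ≤ 0 := by linarith [h₁ x₂, h₂ x₁]
  exact sub_nonpos.mp (nonpos_of_mul_nonpos_right key (sub_pos.mpr hμ))

section

variable {ι 𝕜 : Type*} [Fintype ι] [RCLike 𝕜]

open RCLike

def quadraticObjective (M : Matrix ι ι 𝕜) (b v : ι → 𝕜) : ℝ :=
  re (star v ⬝ᵥ (M *ᵥ v)) - 2 * re (star b ⬝ᵥ v)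

theorem Matrix.IsHermitian.quadraticObjective_add_of_mulVec_eq {M : Matrix ι ι 𝕜}
    (hM : M.IsHermitian) {b x : ι → 𝕜} (hx : M *ᵥ x = b) (d : ι → 𝕜) :
    quadraticObjective M b (x + d) = quadraticObjective M b x + re (star d ⬝ᵥ (M *ᵥ d)) := by
  have hcross : re (star x ⬝ᵥ (M *ᵥ d)) = re (star b ⬝ᵥ d) := by
    rw [dotProduct_mulVec, ← hM.eq, ← star_mulVec, hx]
  have hswap : re (star d ⬝ᵥ b) = re (star b ⬝ᵥ d) := by
    rw [← conj_re (star b ⬝ᵥ d), ← star_def, star_dotProduct]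
  simp only [quadraticObjective, star_add, mulVec_add, add_dotProduct, dotProduct_add, map_add,
    hx, hcross, hswap]
  ring

theorem Matrix.PosSemidef.quadraticObjective_le_of_mulVec_eq {M : Matrix ι ι 𝕜}
    (hM : M.PosSemidef) {b x : ι → 𝕜} (hx : M *ᵥ x = b) (v : ι → 𝕜) :
    quadraticObjective M b x ≤ quadraticObjective M b v := by
  obtain ⟨d, rfl⟩ : ∃ d, v = x + d := ⟨v - x, by abel⟩
  rw [hM.isHermitian.quadraticObjective_add_of_mulVec_eq hx]
  exact le_add_of_nonneg_right (hM.re_dotProduct_nonneg d)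

end

theorem quadraticObjective_add_smul_one {ι : Type*} [Fintype ι] [DecidableEq ι]
    (Ξ C : Matrix ι ι ℂ) (hC : C.IsHermitian) (lam μ : ℝ) (w₀ ω v : ι → ℂ) :
    quadraticObjective (Ξ + ((μ * lam : ℝ) : ℂ) • (1 : Matrix ι ι ℂ)) (ω + (μ : ℂ) • (C *ᵥ w₀)) v
      = quadraticObjective Ξ ω v
        + μ * (lam * (star v ⬝ᵥ v).re - 2 * (star w₀ ⬝ᵥ (C *ᵥ v)).re) := by
  have hCw₀ : star (C *ᵥ w₀) ⬝ᵥ v = star w₀ ⬝ᵥ (C *ᵥ v) := by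
    rw [star_mulVec, hC.eq, ← dotProduct_mulVec]
  rw [quadraticObjective, quadraticObjective, add_mulVec, smul_mulVec, one_mulVec,
    dotProduct_add, dotProduct_smul, star_add, star_smul, add_dotProduct, smul_dotProduct, hCw₀]
  simp only [RCLike.re_to_complex, Complex.star_def, Complex.conj_ofReal, smul_eq_mul,
    Complex.add_re, Complex.mul_re, Complex.ofReal_re, Complex.ofReal_im]
  ring

/-- With `Ξ` Hermitian positive definite, `λ > 0`, `C` Hermitian positive
semidefinite, `w₀, ω ∈ ℂⁿ`, define for `μ ≥ 0`:
`w(μ) = (Ξ + μλI)⁻¹(ω + μ·C·w₀)` and `P(μ) = λ‖w(μ)‖² − 2·Re(w₀ᴴ C w(μ))`.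
Then `P` is monotonically non-increasing on `[0, ∞)`. -/
theorem stmt5 (n : ℕ) (Ξ : Matrix (Fin n) (Fin n) ℂ) (hΞ : Ξ.PosDef)
    (lam : ℝ) (hlam : 0 < lam)
    (C : Matrix (Fin n) (Fin n) ℂ) (hC : C.PosSemidef) (w₀ ω : Fin n → ℂ) :
    let w : ℝ → (Fin n → ℂ) := fun μ =>
      (Ξ + ((μ * lam : ℝ) : ℂ) • (1 : Matrix (Fin n) (Fin n) ℂ))⁻¹ *ᵥ (ω + (μ : ℂ) • (C *ᵥ w₀))
    let P : ℝ → ℝ := fun μ =>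
      lam * (star (w μ) ⬝ᵥ w μ).re - 2 * (star w₀ ⬝ᵥ (C *ᵥ w μ)).re
    ∀ μ₁ μ₂ : ℝ, 0 ≤ μ₁ → μ₁ ≤ μ₂ → P μ₂ ≤ P μ₁ := by
  intro w P μ₁ μ₂ hμ₁ hμ₁₂
  obtain rfl | hlt := hμ₁₂.eq_or_lt
  · exact le_rfl
  let Q : (Fin n → ℂ) → ℝ := fun v => lam * (star v ⬝ᵥ v).re - 2 * (star w₀ ⬝ᵥ (C *ᵥ v)).re
  have hw_min : ∀ μ, 0 ≤ μ → ∀ v,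
      quadraticObjective Ξ ω (w μ) + μ * Q (w μ) ≤ quadraticObjective Ξ ω v + μ * Q v := by
    intro μ hμ v
    set M := Ξ + ((μ * lam : ℝ) : ℂ) • (1 : Matrix (Fin n) (Fin n) ℂ)
    have hM : M.PosDef :=
      hΞ.add_posSemidef (PosSemidef.one.smul (Complex.zero_le_real.mpr (by positivity)))
    have hsolve : M *ᵥ w μ = ω + (μ : ℂ) • (C *ᵥ w₀) := by
      rw [mulVec_mulVec, mul_nonsing_inv _ ((isUnit_iff_isUnit_det _).mp hM.isUnit), one_mulVec]
    simpa only [M, quadraticObjective_add_smul_one Ξ C hC.isHermitian]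
      using hM.posSemidef.quadraticObjective_le_of_mulVec_eq hsolve v
  show Q (w μ₂) ≤ Q (w μ₁)
  exact le_of_minimizes_add_mul (hw_min μ₁ hμ₁) (hw_min μ₂ (hμ₁.trans hμ₁₂)) hlt
end
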